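/- arXiv:2102.09287 — 4 statements merged into one kernel-verified Lean document; each statement's English description precedes it below -/
import Mathlib

section
/- In the setting of the unconstrained IPO bias result (integrable y⁽ⁱ⁾ : Ω → ℝ^{d_z} with E[y⁽ⁱ⁾] = P diag(x⁽ⁱ⁾) θ₀, and H, d_u invertible), the corrected estimator θ_u* = d_u⁻¹ H θ*, where θ* = H⁻¹ d(y), is unbiased: E[θ_u*] = θ₀. -/
open Matrix MeasureTheory ProbabilityTheory

/-! Since `H H⁻¹ = 1`, the estimator is `d_u⁻¹ d(y)`. The map `y ↦ d(y)` is linear, so it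
commutes with taking means, and `d(E y) = d(P diag(x⁽ⁱ⁾) θ₀) = d_u θ₀`. -/

/-- The IPO Hessian `H = (1/(mδ)) Σᵢ diag(x⁽ⁱ⁾) Pᵀ (V̂⁽ⁱ⁾)⁻¹ V⁽ⁱ⁾ (V̂⁽ⁱ⁾)⁻¹ P diag(x⁽ⁱ⁾)`. -/
noncomputable def ipoH {m dx dz : ℕ} (δ : ℝ) (x : Fin m → Fin dx → ℝ)
    (P : Matrix (Fin dz) (Fin dx) ℝ) (Vh V : Fin m → Matrix (Fin dz) (Fin dz) ℝ) :
    Matrix (Fin dx) (Fin dx) ℝ :=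
  (1 / ((m : ℝ) * δ)) •
    ∑ i, diagonal (x i) * Pᵀ * (Vh i)⁻¹ * V i * (Vh i)⁻¹ * P * diagonal (x i)

/-- The IPO linear term `d = (1/(mδ)) Σᵢ diag(x⁽ⁱ⁾) Pᵀ (V̂⁽ⁱ⁾)⁻¹ y⁽ⁱ⁾`. -/
noncomputable def ipoD {m dx dz : ℕ} (δ : ℝ) (x : Fin m → Fin dx → ℝ)
    (P : Matrix (Fin dz) (Fin dx) ℝ) (Vh : Fin m → Matrix (Fin dz) (Fin dz) ℝ)
    (y : Fin m → Fin dz → ℝ) : Fin dx → ℝ :=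
  (1 / ((m : ℝ) * δ)) • ∑ i, (diagonal (x i) * Pᵀ * (Vh i)⁻¹) *ᵥ y i

/-- The unconstrained IPO portfolio `z*(θ, i) = (1/δ) (V̂⁽ⁱ⁾)⁻¹ P diag(x⁽ⁱ⁾) θ`. -/
noncomputable def ipoZ {m dx dz : ℕ} (δ : ℝ) (x : Fin m → Fin dx → ℝ)
    (P : Matrix (Fin dz) (Fin dx) ℝ) (Vh : Fin m → Matrix (Fin dz) (Fin dz) ℝ)
    (i : Fin m) (θ : Fin dx → ℝ) : Fin dz → ℝ :=
  (1 / δ) • (((Vh i)⁻¹ * P * diagonal (x i)) *ᵥ θ)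

/-- The IPO objective
`L(θ) = (1/m) Σᵢ [ -z*(θ,i)ᵀ y⁽ⁱ⁾ + (δ/2) z*(θ,i)ᵀ V⁽ⁱ⁾ z*(θ,i) ]`. -/
noncomputable def ipoL {m dx dz : ℕ} (δ : ℝ) (x : Fin m → Fin dx → ℝ)
    (P : Matrix (Fin dz) (Fin dx) ℝ) (Vh V : Fin m → Matrix (Fin dz) (Fin dz) ℝ)
    (y : Fin m → Fin dz → ℝ) (θ : Fin dx → ℝ) : ℝ :=
  (1 / (m : ℝ)) * ∑ i, (-(ipoZ δ x P Vh i θ ⬝ᵥ y i)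
      + (δ / 2) * (ipoZ δ x P Vh i θ ⬝ᵥ (V i *ᵥ ipoZ δ x P Vh i θ)))

/-- The unbiasing matrix `d_u = (1/(mδ)) Σᵢ diag(x⁽ⁱ⁾) Pᵀ (V̂⁽ⁱ⁾)⁻¹ P diag(x⁽ⁱ⁾)`. -/
noncomputable def ipoDu {m dx dz : ℕ} (δ : ℝ) (x : Fin m → Fin dx → ℝ)
    (P : Matrix (Fin dz) (Fin dx) ℝ) (Vh : Fin m → Matrix (Fin dz) (Fin dz) ℝ) :
    Matrix (Fin dx) (Fin dx) ℝ :=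
  (1 / ((m : ℝ) * δ)) • ∑ i, diagonal (x i) * Pᵀ * (Vh i)⁻¹ * P * diagonal (x i)

theorem integral_apply_linearMap {Ω E ι : Type*} [MeasurableSpace Ω] {μ : Measure Ω}
    [NormedAddCommGroup E] [NormedSpace ℝ E] [FiniteDimensional ℝ E] [Fintype ι]
    (L : E →ₗ[ℝ] ι → ℝ) {Y : Ω → E} (hY : Integrable Y μ) :
    (fun j => ∫ ω, L (Y ω) j ∂μ) = L (∫ ω, Y ω ∂μ) := by
  have hLY : Integrable (fun ω => L (Y ω)) μ := L.toContinuousLinearMap.integrable_comp hY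
  ext j
  rw [← eval_integral hLY.eval j]
  exact congrFun (L.toContinuousLinearMap.integral_comp_comm hY) j

theorem integral_pi_pi {Ω ι κ : Type*} [MeasurableSpace Ω] {μ : Measure Ω} [Fintype ι]
    [Fintype κ] {Y : ι → Ω → κ → ℝ} (hY : ∀ i j, Integrable (fun ω => Y i ω j) μ) :
    ∫ ω, (fun i => Y i ω) ∂μ = fun i j => ∫ ω, Y i ω j ∂μ := by
  ext i j
  rw [eval_integral (fun i => Integrable.of_eval (hY i)), eval_integral (hY i)]

noncomputable def ipoDLinearMap {m dx dz : ℕ} (δ : ℝ) (x : Fin m → Fin dx → ℝ)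
    (P : Matrix (Fin dz) (Fin dx) ℝ) (Vh : Fin m → Matrix (Fin dz) (Fin dz) ℝ) :
    (Fin m → Fin dz → ℝ) →ₗ[ℝ] Fin dx → ℝ where
  toFun := ipoD δ x P Vh
  map_add' y y' := by simp [ipoD, mulVec_add, Finset.sum_add_distrib]
  map_smul' c y := by simp [ipoD, mulVec_smul, ← Finset.smul_sum, smul_comm c]

theorem ipoD_mulVec_diagonal {m dx dz : ℕ} (δ : ℝ) (x : Fin m → Fin dx → ℝ)
    (P : Matrix (Fin dz) (Fin dx) ℝ) (Vh : Fin m → Matrix (Fin dz) (Fin dz) ℝ)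
    (θ : Fin dx → ℝ) :
    ipoD δ x P Vh (fun i => P *ᵥ (diagonal (x i) *ᵥ θ)) = ipoDu δ x P Vh *ᵥ θ := by
  simp [ipoD, ipoDu, smul_mulVec, sum_mulVec, mulVec_mulVec, Matrix.mul_assoc]

theorem stmt_7_general {m dx dz : ℕ} (δ : ℝ)
    (x : Fin m → Fin dx → ℝ) (P : Matrix (Fin dz) (Fin dx) ℝ)
    (Vh V : Fin m → Matrix (Fin dz) (Fin dz) ℝ)
    {Ω : Type} [MeasurableSpace Ω] (μ : Measure Ω)
    (y : Fin m → Ω → Fin dz → ℝ) (θ₀ : Fin dx → ℝ)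
    (hint : ∀ i j, Integrable (fun ω => y i ω j) μ)
    (hmean : ∀ i, (fun j => ∫ ω, y i ω j ∂μ) = P *ᵥ (diagonal (x i) *ᵥ θ₀))
    (hH : IsUnit (ipoH δ x P Vh V).det) (hDu : IsUnit (ipoDu δ x P Vh).det) :
    (fun j => ∫ ω, ((ipoDu δ x P Vh)⁻¹ *ᵥ (ipoH δ x P Vh V *ᵥ
        ((ipoH δ x P Vh V)⁻¹ *ᵥ ipoD δ x P Vh (fun i => y i ω)))) j ∂μ) = θ₀ := by
  simp only [mulVec_mulVec, mul_nonsing_inv _ hH, one_mulVec]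
  have hY : Integrable (fun ω i => y i ω) μ :=
    Integrable.of_eval fun i => Integrable.of_eval (hint i)
  have hEY : ∫ ω, (fun i => y i ω) ∂μ = fun i => P *ᵥ (diagonal (x i) *ᵥ θ₀) := by
    rw [integral_pi_pi hint]
    exact funext hmean
  calc _ = (ipoDu δ x P Vh)⁻¹ *ᵥ ipoD δ x P Vh (∫ ω, (fun i => y i ω) ∂μ) :=
        integral_apply_linearMap
          ((ipoDu δ x P Vh)⁻¹.mulVecLin ∘ₗ ipoDLinearMap δ x P Vh) hY
    _ = θ₀ := by
      rw [hEY, ipoD_mulVec_diagonal, mulVec_mulVec, nonsing_inv_mul _ hDu, one_mulVec]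

/-- The corrected estimator `θ_u* = d_u⁻¹ H θ*`, with `θ* = H⁻¹ d(y)`, is unbiased:
`E[θ_u*] = θ₀`. -/
theorem stmt_7 {m dx dz : ℕ} (hm : 0 < m) (δ : ℝ) (hδ : 0 < δ)
    (x : Fin m → Fin dx → ℝ) (P : Matrix (Fin dz) (Fin dx) ℝ)
    (Vh V : Fin m → Matrix (Fin dz) (Fin dz) ℝ)
    (hVh : ∀ i, (Vh i).PosDef) (hV : ∀ i, (V i).PosDef)
    {Ω : Type} [MeasurableSpace Ω] (μ : Measure Ω) [IsProbabilityMeasure μ]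
    (y : Fin m → Ω → Fin dz → ℝ) (θ₀ : Fin dx → ℝ)
    (hint : ∀ i j, Integrable (fun ω => y i ω j) μ)
    (hmean : ∀ i, (fun j => ∫ ω, y i ω j ∂μ) = P *ᵥ (diagonal (x i) *ᵥ θ₀))
    (hH : IsUnit (ipoH δ x P Vh V).det) (hDu : IsUnit (ipoDu δ x P Vh).det) :
    (fun j => ∫ ω, ((ipoDu δ x P Vh)⁻¹ *ᵥ (ipoH δ x P Vh V *ᵥ
        ((ipoH δ x P Vh V)⁻¹ *ᵥ ipoD δ x P Vh (fun i => y i ω)))) j ∂μ) = θ₀ :=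
  stmt_7_general δ x P Vh V μ y θ₀ hint hmean hH hDu
end

section
/- Under the setup of the unconstrained IPO problem (δ > 0; x⁽ⁱ⁾ ∈ ℝ^{d_x}; y⁽ⁱ⁾ ∈ ℝ^{d_z}; P ∈ ℝ^{d_z×d_x} of full column rank; symmetric positive definite V̂⁽ⁱ⁾, V⁽ⁱ⁾; some x⁽ⁱ⁾ with all coordinates nonzero), define z*(θ, i) = (1/δ)(V̂⁽ⁱ⁾)⁻¹ P diag(x⁽ⁱ⁾) θ and z_ep(i) = (1/δ)(V⁽ⁱ⁾)⁻¹ y⁽ⁱ⁾ (the ex-post optimal portfolio). Then θ* = H⁻¹ d is the unique global minimizer over θ ∈ ℝ^{d_x} of the average tracking error L_te(θ) = (1/(2m)) Σ_{i=1}^m (z*(θ,i) − z_ep(i))ᵀ V⁽ⁱ⁾ (z*(θ,i) − z_ep(i)). -/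
open Matrix MeasureTheory ProbabilityTheory

/-- The ex-post optimal portfolio `z_ep(i) = (1/δ) (V⁽ⁱ⁾)⁻¹ y⁽ⁱ⁾`. -/
noncomputable def ipoZep {m dz : ℕ} (δ : ℝ) (V : Fin m → Matrix (Fin dz) (Fin dz) ℝ)
    (y : Fin m → Fin dz → ℝ) (i : Fin m) : Fin dz → ℝ :=
  (1 / δ) • ((V i)⁻¹ *ᵥ y i)

/-- The average tracking error
`L_te(θ) = (1/(2m)) Σᵢ (z*(θ,i) − z_ep(i))ᵀ V⁽ⁱ⁾ (z*(θ,i) − z_ep(i))`. -/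
noncomputable def ipoLte {m dx dz : ℕ} (δ : ℝ) (x : Fin m → Fin dx → ℝ)
    (P : Matrix (Fin dz) (Fin dx) ℝ) (Vh V : Fin m → Matrix (Fin dz) (Fin dz) ℝ)
    (y : Fin m → Fin dz → ℝ) (θ : Fin dx → ℝ) : ℝ :=
  (1 / (2 * (m : ℝ))) * ∑ i,
    ((ipoZ δ x P Vh i θ - ipoZep δ V y i) ⬝ᵥ
      (V i *ᵥ (ipoZ δ x P Vh i θ - ipoZep δ V y i)))

/-!
Since `V⁽ⁱ⁾ z_ep(i) = y⁽ⁱ⁾ / δ`, expanding the squares gives `L_te = L / δ + const`, where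
`L(θ) = ½ θᵀHθ − θᵀd` is the IPO objective. Writing `Bᵢ = (V̂⁽ⁱ⁾)⁻¹ P diag(x⁽ⁱ⁾)`, the matrix
`H = (1/(mδ)) Σᵢ Bᵢᵀ V⁽ⁱ⁾ Bᵢ` is positive semidefinite termwise and positive definite in the
term where `x⁽ⁱ⁾` has no zero coordinate, since there `Bᵢ` is injective. Completing the square,
`L(θ) − L(H⁻¹d) = ½ (θ − H⁻¹d)ᵀ H (θ − H⁻¹d)`, which is positive unless `θ = H⁻¹d`.
-/

theorem Matrix.posDef_sum_of_posSemidef {n R ι : Type*} [Ring R] [PartialOrder R] [StarRing R]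
    [AddLeftMono R] {A : ι → Matrix n n R} {s : Finset ι}
    (hA : ∀ i ∈ s, (A i).PosSemidef) {i₀ : ι} (hi₀ : i₀ ∈ s) (hA₀ : (A i₀).PosDef) :
    (∑ i ∈ s, A i).PosDef := by
  classical
  rw [← Finset.add_sum_erase s A hi₀]
  exact hA₀.add_posSemidef (posSemidef_sum _ fun i hi => hA i (Finset.mem_of_mem_erase hi))

section QuadraticObjective

variable {n : Type*} [Fintype n]

theorem Matrix.IsSymm.dotProduct_mulVec_comm {R : Type*} [CommSemiring R] {A : Matrix n n R}
    (hA : A.IsSymm) (u w : n → R) : u ⬝ᵥ (A *ᵥ w) = w ⬝ᵥ (A *ᵥ u) := by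
  simpa only [hA.eq] using dotProduct_transpose_mulVec A u w

theorem Matrix.IsSymm.sub_dotProduct_mulVec_sub {R : Type*} [CommRing R] {A : Matrix n n R}
    (hA : A.IsSymm) (u w : n → R) :
    (u - w) ⬝ᵥ (A *ᵥ (u - w)) = u ⬝ᵥ (A *ᵥ u) - 2 * (u ⬝ᵥ (A *ᵥ w)) + w ⬝ᵥ (A *ᵥ w) := by
  simp only [mulVec_sub, dotProduct_sub, sub_dotProduct, hA.dotProduct_mulVec_comm w u]
  ring

noncomputable def quadraticObjective (H : Matrix n n ℝ) (d θ : n → ℝ) : ℝ :=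
  2⁻¹ * (θ ⬝ᵥ (H *ᵥ θ)) - θ ⬝ᵥ d

theorem quadraticObjective_sub_of_mulVec_eq {H : Matrix n n ℝ} (hH : H.IsSymm) {d θ₀ : n → ℝ}
    (hθ₀ : H *ᵥ θ₀ = d) (θ : n → ℝ) :
    quadraticObjective H d θ - quadraticObjective H d θ₀ =
      2⁻¹ * ((θ - θ₀) ⬝ᵥ (H *ᵥ (θ - θ₀))) := by
  rw [hH.sub_dotProduct_mulVec_sub, quadraticObjective, quadraticObjective, hθ₀]
  ring

theorem Matrix.PosDef.quadraticObjective_inv_mulVec_lt [DecidableEq n] {H : Matrix n n ℝ}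
    (hH : H.PosDef) (d : n → ℝ) {θ : n → ℝ} (hθ : θ ≠ H⁻¹ *ᵥ d) :
    quadraticObjective H d (H⁻¹ *ᵥ d) < quadraticObjective H d θ := by
  have hsolve : H *ᵥ (H⁻¹ *ᵥ d) = d := by
    rw [mulVec_mulVec, mul_nonsing_inv _ ((isUnit_iff_isUnit_det H).1 hH.isUnit), one_mulVec]
  have hpos := hH.dotProduct_mulVec_pos (sub_ne_zero.2 hθ)
  rw [star_trivial] at hpos
  linarith [quadraticObjective_sub_of_mulVec_eq (isHermitian_iff_isSymm.1 hH.isHermitian) hsolve θ]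

end QuadraticObjective

section IPO

variable {m dx dz : ℕ} (δ : ℝ) (x : Fin m → Fin dx → ℝ) (P : Matrix (Fin dz) (Fin dx) ℝ)
  (Vh V : Fin m → Matrix (Fin dz) (Fin dz) ℝ) (y : Fin m → Fin dz → ℝ)

noncomputable def ipoPortfolioMatrix (i : Fin m) : Matrix (Fin dz) (Fin dx) ℝ :=
  (Vh i)⁻¹ * P * diagonal (x i)

theorem ipoZ_eq (i : Fin m) (θ : Fin dx → ℝ) :
    ipoZ δ x P Vh i θ = δ⁻¹ • (ipoPortfolioMatrix x P Vh i *ᵥ θ) := by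
  rw [ipoZ, ipoPortfolioMatrix, one_div]

theorem transpose_ipoPortfolioMatrix {i : Fin m} (hVh : (Vh i).IsSymm) :
    (ipoPortfolioMatrix x P Vh i)ᵀ = diagonal (x i) * Pᵀ * (Vh i)⁻¹ := by
  rw [ipoPortfolioMatrix, transpose_mul, transpose_mul, diagonal_transpose, hVh.inv.eq,
    Matrix.mul_assoc]

theorem dotProduct_ipoH_mulVec (hVh : ∀ i, (Vh i).IsSymm) (θ : Fin dx → ℝ) :
    θ ⬝ᵥ (ipoH δ x P Vh V *ᵥ θ) = (1 / (m * δ)) * ∑ i,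
      (ipoPortfolioMatrix x P Vh i *ᵥ θ) ⬝ᵥ (V i *ᵥ (ipoPortfolioMatrix x P Vh i *ᵥ θ)) := by
  simp only [ipoH, smul_mulVec, sum_mulVec, dotProduct_smul, dotProduct_sum, smul_eq_mul]
  congr 1
  refine Finset.sum_congr rfl fun i _ => ?_
  have hsummand : diagonal (x i) * Pᵀ * (Vh i)⁻¹ * V i * (Vh i)⁻¹ * P * diagonal (x i) =
      (ipoPortfolioMatrix x P Vh i)ᵀ * (V i * ipoPortfolioMatrix x P Vh i) := by
    rw [transpose_ipoPortfolioMatrix x P Vh (hVh i)]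
    simp only [ipoPortfolioMatrix, Matrix.mul_assoc]
  rw [hsummand, ← mulVec_mulVec, dotProduct_transpose_mulVec, dotProduct_comm, mulVec_mulVec]

theorem dotProduct_ipoD (hVh : ∀ i, (Vh i).IsSymm) (θ : Fin dx → ℝ) :
    θ ⬝ᵥ ipoD δ x P Vh y =
      (1 / (m * δ)) * ∑ i, (ipoPortfolioMatrix x P Vh i *ᵥ θ) ⬝ᵥ y i := by
  simp only [ipoD, dotProduct_smul, dotProduct_sum, smul_eq_mul,
    ← transpose_ipoPortfolioMatrix x P Vh (hVh _), dotProduct_transpose_mulVec, dotProduct_comm]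

theorem ipoL_eq_quadraticObjective (hδ : δ ≠ 0) (hVh : ∀ i, (Vh i).IsSymm) (θ : Fin dx → ℝ) :
    ipoL δ x P Vh V y θ = quadraticObjective (ipoH δ x P Vh V) (ipoD δ x P Vh y) θ := by
  rw [quadraticObjective, dotProduct_ipoH_mulVec δ x P Vh V hVh, dotProduct_ipoD δ x P Vh y hVh,
    ipoL, Finset.mul_sum, Finset.mul_sum, Finset.mul_sum, Finset.mul_sum, ← Finset.sum_sub_distrib]
  refine Finset.sum_congr rfl fun i _ => ?_
  simp only [ipoZ_eq, mulVec_smul, smul_dotProduct, dotProduct_smul, smul_eq_mul]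
  field_simp
  ring

theorem mulVec_ipoZep {i : Fin m} (hV : IsUnit (V i)) :
    V i *ᵥ ipoZep δ V y i = δ⁻¹ • y i := by
  rw [ipoZep, mulVec_smul, mulVec_mulVec, mul_nonsing_inv _ ((isUnit_iff_isUnit_det _).1 hV),
    one_mulVec, one_div]

theorem ipoLte_eq (hδ : δ ≠ 0) (hV : ∀ i, (V i).IsSymm) (hVunit : ∀ i, IsUnit (V i))
    (θ : Fin dx → ℝ) :
    ipoLte δ x P Vh V y θ = δ⁻¹ * ipoL δ x P Vh V y θ +
      (1 / (2 * m)) * ∑ i, ipoZep δ V y i ⬝ᵥ (V i *ᵥ ipoZep δ V y i) := by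
  rw [ipoLte, ipoL, Finset.mul_sum, Finset.mul_sum, Finset.mul_sum, Finset.mul_sum,
    ← Finset.sum_add_distrib]
  refine Finset.sum_congr rfl fun i _ => ?_
  rw [(hV i).sub_dotProduct_mulVec_sub, mulVec_ipoZep δ V y (hVunit i), dotProduct_smul,
    smul_eq_mul]
  field_simp
  ring

theorem injective_mulVec_ipoPortfolioMatrix (hP : Function.Injective P.mulVec) {i : Fin m}
    (hVh : IsUnit (Vh i)) (hx : ∀ j, x i j ≠ 0) :
    Function.Injective (ipoPortfolioMatrix x P Vh i).mulVec := by
  have hdiag : Function.Injective (diagonal (x i)).mulVec :=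
    mulVec_injective_iff_isUnit.2 (isUnit_diagonal.2 (Pi.isUnit_iff.2 fun j => (hx j).isUnit))
  have hinv : Function.Injective (Vh i)⁻¹.mulVec :=
    mulVec_injective_iff_isUnit.2 (isUnit_nonsing_inv_iff.2 hVh)
  have hcomp : (ipoPortfolioMatrix x P Vh i).mulVec =
      (Vh i)⁻¹.mulVec ∘ P.mulVec ∘ (diagonal (x i)).mulVec := by
    ext v : 1
    simp only [ipoPortfolioMatrix, Function.comp_apply, mulVec_mulVec, Matrix.mul_assoc]
  rw [hcomp]
  exact hinv.comp (hP.comp hdiag)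

theorem ipoH_posDef (hδ : 0 < δ) (hP : Function.Injective P.mulVec)
    (hVh : ∀ i, (Vh i).PosDef) (hV : ∀ i, (V i).PosDef) (hx : ∃ i, ∀ j, x i j ≠ 0) :
    (ipoH δ x P Vh V).PosDef := by
  obtain ⟨i₀, hi₀⟩ := hx
  have hm : (0 : ℝ) < m := Nat.cast_pos.2 (Fin.pos i₀)
  have hH : ipoH δ x P Vh V = (1 / (m * δ)) • ∑ i,
      (ipoPortfolioMatrix x P Vh i)ᴴ * V i * ipoPortfolioMatrix x P Vh i := by
    refine congrArg _ (Finset.sum_congr rfl fun i _ => ?_)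
    rw [conjTranspose_eq_transpose_of_trivial,
      transpose_ipoPortfolioMatrix x P Vh (isHermitian_iff_isSymm.1 (hVh i).isHermitian)]
    simp only [ipoPortfolioMatrix, Matrix.mul_assoc]
  rw [hH]
  refine PosDef.smul (posDef_sum_of_posSemidef (fun i _ => ?_) (Finset.mem_univ i₀) ?_)
    (by positivity)
  · exact (hV i).posSemidef.conjTranspose_mul_mul_same _
  · exact (hV i₀).conjTranspose_mul_mul_same
      (injective_mulVec_ipoPortfolioMatrix x P Vh hP (hVh i₀).isUnit hi₀)

end IPO

theorem stmt_10_general {m dx dz : ℕ} (δ : ℝ) (hδ : 0 < δ)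
    (x : Fin m → Fin dx → ℝ) (y : Fin m → Fin dz → ℝ)
    (P : Matrix (Fin dz) (Fin dx) ℝ) (hP : ∀ v : Fin dx → ℝ, P *ᵥ v = 0 → v = 0)
    (Vh V : Fin m → Matrix (Fin dz) (Fin dz) ℝ)
    (hVh : ∀ i, (Vh i).PosDef) (hV : ∀ i, (V i).PosDef)
    (hx : ∃ i, ∀ j, x i j ≠ 0) :
    ∀ θ : Fin dx → ℝ,
      ipoLte δ x P Vh V y ((ipoH δ x P Vh V)⁻¹ *ᵥ ipoD δ x P Vh y) ≤
        ipoLte δ x P Vh V y θ ∧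
      (ipoLte δ x P Vh V y θ =
          ipoLte δ x P Vh V y ((ipoH δ x P Vh V)⁻¹ *ᵥ ipoD δ x P Vh y) →
        θ = (ipoH δ x P Vh V)⁻¹ *ᵥ ipoD δ x P Vh y) := by
  have hPinj : Function.Injective P.mulVec := fun v w h =>
    sub_eq_zero.1 (hP _ (by rw [mulVec_sub, h, sub_self]))
  have hsymm : ∀ {A : Matrix (Fin dz) (Fin dz) ℝ}, A.PosDef → A.IsSymm := fun hA =>
    isHermitian_iff_isSymm.1 hA.isHermitian
  have hLte (θ : Fin dx → ℝ) : ipoLte δ x P Vh V y θ =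
      δ⁻¹ * quadraticObjective (ipoH δ x P Vh V) (ipoD δ x P Vh y) θ +
        (1 / (2 * m)) * ∑ i, ipoZep δ V y i ⬝ᵥ (V i *ᵥ ipoZep δ V y i) := by
    rw [ipoLte_eq δ x P Vh V y hδ.ne' (fun i => hsymm (hV i)) (fun i => (hV i).isUnit),
      ipoL_eq_quadraticObjective δ x P Vh V y hδ.ne' (fun i => hsymm (hVh i))]
  intro θ
  set θ₀ := (ipoH δ x P Vh V)⁻¹ *ᵥ ipoD δ x P Vh y
  obtain rfl | hne := eq_or_ne θ θ₀
  · exact ⟨le_rfl, fun _ => rfl⟩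
  have hlt : ipoLte δ x P Vh V y θ₀ < ipoLte δ x P Vh V y θ := by
    rw [hLte, hLte]
    gcongr
    exact (ipoH_posDef δ x P Vh V hδ hPinj hVh hV hx).quadraticObjective_inv_mulVec_lt _ hne
  exact ⟨hlt.le, fun h => absurd h hlt.ne'⟩

/-- `θ* = H⁻¹ d` is the unique global minimizer of the average tracking error to the
ex-post optimal mean-variance portfolios. -/
theorem stmt_10 {m dx dz : ℕ} (hm : 0 < m) (δ : ℝ) (hδ : 0 < δ)
    (x : Fin m → Fin dx → ℝ) (y : Fin m → Fin dz → ℝ)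
    (P : Matrix (Fin dz) (Fin dx) ℝ) (hP : ∀ v : Fin dx → ℝ, P *ᵥ v = 0 → v = 0)
    (Vh V : Fin m → Matrix (Fin dz) (Fin dz) ℝ)
    (hVh : ∀ i, (Vh i).PosDef) (hV : ∀ i, (V i).PosDef)
    (hx : ∃ i, ∀ j, x i j ≠ 0) :
    ∀ θ : Fin dx → ℝ,
      ipoLte δ x P Vh V y ((ipoH δ x P Vh V)⁻¹ *ᵥ ipoD δ x P Vh y) ≤
        ipoLte δ x P Vh V y θ ∧
      (ipoLte δ x P Vh V y θ =
          ipoLte δ x P Vh V y ((ipoH δ x P Vh V)⁻¹ *ᵥ ipoD δ x P Vh y) →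
        θ = (ipoH δ x P Vh V)⁻¹ *ᵥ ipoD δ x P Vh y) :=
  stmt_10_general δ hδ x y P hP Vh V hVh hV hx
end

section
/- Let (Ω, μ) be a probability space and y⁽¹⁾,…,y⁽ᵐ⁾ : Ω → ℝ^{d_z} integrable random vectors with E[y⁽ⁱ⁾] = P diag(x⁽ⁱ⁾) θ₀. In the equality-constrained IPO setting with A z₀ = b and range(F) = ker(A), and with H_eq invertible, define θ_eq* = H_eq⁻¹ d_eq(y). Then E[θ_eq*] = H_eq⁻¹ d_e θ₀ + H_eq⁻¹ r, where d_e = (1/(mδ)) Σᵢ diag(x⁽ⁱ⁾) Pᵀ F (FᵀV̂⁽ⁱ⁾F)⁻¹ Fᵀ P diag(x⁽ⁱ⁾) and r = −(1/(mδ)) Σᵢ diag(x⁽ⁱ⁾) Pᵀ F (FᵀV̂⁽ⁱ⁾F)⁻¹ Fᵀ V⁽ⁱ⁾ (I − F (FᵀV̂⁽ⁱ⁾F)⁻¹ Fᵀ V̂⁽ⁱ⁾) z₀ is the deterministic term of d_eq; in particular the linear response of E[θ_eq*] to θ₀ is H_eq⁻¹ d_e. -/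
open Matrix MeasureTheory ProbabilityTheory

/-- Equality-constrained IPO portfolio
`z*(θ, i) = (1/δ) F (FᵀV̂⁽ⁱ⁾F)⁻¹ Fᵀ P diag(x⁽ⁱ⁾) θ + (I − F (FᵀV̂⁽ⁱ⁾F)⁻¹ Fᵀ V̂⁽ⁱ⁾) z₀`. -/
noncomputable def eqZ {m dx dz dn : ℕ} (δ : ℝ) (x : Fin m → Fin dx → ℝ)
    (P : Matrix (Fin dz) (Fin dx) ℝ) (Vh : Fin m → Matrix (Fin dz) (Fin dz) ℝ)
    (F : Matrix (Fin dz) (Fin dn) ℝ) (z₀ : Fin dz → ℝ)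
    (i : Fin m) (θ : Fin dx → ℝ) : Fin dz → ℝ :=
  (1 / δ) • ((F * (Fᵀ * Vh i * F)⁻¹ * Fᵀ * P * diagonal (x i)) *ᵥ θ) +
    (1 - F * (Fᵀ * Vh i * F)⁻¹ * Fᵀ * Vh i) *ᵥ z₀

/-- Equality-constrained IPO Hessian
`H_eq = (1/(mδ)) Σᵢ diag(x⁽ⁱ⁾) Pᵀ F (FᵀV̂⁽ⁱ⁾F)⁻¹ Fᵀ V⁽ⁱ⁾ F (FᵀV̂⁽ⁱ⁾F)⁻¹ Fᵀ P diag(x⁽ⁱ⁾)`. -/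
noncomputable def eqH {m dx dz dn : ℕ} (δ : ℝ) (x : Fin m → Fin dx → ℝ)
    (P : Matrix (Fin dz) (Fin dx) ℝ) (Vh V : Fin m → Matrix (Fin dz) (Fin dz) ℝ)
    (F : Matrix (Fin dz) (Fin dn) ℝ) : Matrix (Fin dx) (Fin dx) ℝ :=
  (1 / ((m : ℝ) * δ)) •
    ∑ i, diagonal (x i) * Pᵀ * F * (Fᵀ * Vh i * F)⁻¹ * Fᵀ * V i * F *
      (Fᵀ * Vh i * F)⁻¹ * Fᵀ * P * diagonal (x i)

/-- Equality-constrained IPO linear term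
`d_eq = (1/(mδ)) Σᵢ diag(x⁽ⁱ⁾) Pᵀ F (FᵀV̂⁽ⁱ⁾F)⁻¹ Fᵀ (y⁽ⁱ⁾ − V⁽ⁱ⁾ (I − F (FᵀV̂⁽ⁱ⁾F)⁻¹ Fᵀ V̂⁽ⁱ⁾) z₀)`. -/
noncomputable def eqD {m dx dz dn : ℕ} (δ : ℝ) (x : Fin m → Fin dx → ℝ)
    (P : Matrix (Fin dz) (Fin dx) ℝ) (Vh V : Fin m → Matrix (Fin dz) (Fin dz) ℝ)
    (F : Matrix (Fin dz) (Fin dn) ℝ) (z₀ : Fin dz → ℝ)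
    (y : Fin m → Fin dz → ℝ) : Fin dx → ℝ :=
  (1 / ((m : ℝ) * δ)) •
    ∑ i, (diagonal (x i) * Pᵀ * F * (Fᵀ * Vh i * F)⁻¹ * Fᵀ) *ᵥ
      (y i - (V i * (1 - F * (Fᵀ * Vh i * F)⁻¹ * Fᵀ * Vh i)) *ᵥ z₀)

/-- The matrix `d_e = (1/(mδ)) Σᵢ diag(x⁽ⁱ⁾) Pᵀ F (FᵀV̂⁽ⁱ⁾F)⁻¹ Fᵀ P diag(x⁽ⁱ⁾)`. -/
noncomputable def eqDe {m dx dz dn : ℕ} (δ : ℝ) (x : Fin m → Fin dx → ℝ)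
    (P : Matrix (Fin dz) (Fin dx) ℝ) (Vh : Fin m → Matrix (Fin dz) (Fin dz) ℝ)
    (F : Matrix (Fin dz) (Fin dn) ℝ) : Matrix (Fin dx) (Fin dx) ℝ :=
  (1 / ((m : ℝ) * δ)) •
    ∑ i, diagonal (x i) * Pᵀ * F * (Fᵀ * Vh i * F)⁻¹ * Fᵀ * P * diagonal (x i)

/-- The deterministic term of `d_eq`:
`r = −(1/(mδ)) Σᵢ diag(x⁽ⁱ⁾) Pᵀ F (FᵀV̂⁽ⁱ⁾F)⁻¹ Fᵀ V⁽ⁱ⁾ (I − F (FᵀV̂⁽ⁱ⁾F)⁻¹ Fᵀ V̂⁽ⁱ⁾) z₀`. -/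
noncomputable def eqR {m dx dz dn : ℕ} (δ : ℝ) (x : Fin m → Fin dx → ℝ)
    (P : Matrix (Fin dz) (Fin dx) ℝ) (Vh V : Fin m → Matrix (Fin dz) (Fin dz) ℝ)
    (F : Matrix (Fin dz) (Fin dn) ℝ) (z₀ : Fin dz → ℝ) : Fin dx → ℝ :=
  -((1 / ((m : ℝ) * δ)) •
    ∑ i, (diagonal (x i) * Pᵀ * F * (Fᵀ * Vh i * F)⁻¹ * Fᵀ * V i *
      (1 - F * (Fᵀ * Vh i * F)⁻¹ * Fᵀ * Vh i)) *ᵥ z₀)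

private lemma mulVec_sum' {n p ι : Type*} [Fintype n] [Fintype p] (s : Finset ι)
    (N : Matrix p n ℝ) (v : ι → n → ℝ) :
    N *ᵥ (∑ i ∈ s, v i) = ∑ i ∈ s, N *ᵥ v i := by
  ext j
  simp only [Matrix.mulVec, dotProduct, Finset.sum_apply, Finset.mul_sum]
  rw [Finset.sum_comm]

private lemma sum_mulVec' {n p ι : Type*} [Fintype n] [Fintype p] (s : Finset ι)
    (M : ι → Matrix p n ℝ) (v : n → ℝ) :
    (∑ i ∈ s, M i) *ᵥ v = ∑ i ∈ s, M i *ᵥ v := by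
  ext j
  simp only [Matrix.mulVec, dotProduct, Matrix.sum_apply, Finset.sum_apply, Finset.sum_mul]
  rw [Finset.sum_comm]

/-- If `E[y⁽ⁱ⁾] = P diag(x⁽ⁱ⁾) θ₀`, then the equality-constrained IPO estimator
`θ_eq* = H_eq⁻¹ d_eq(y)` satisfies `E[θ_eq*] = H_eq⁻¹ d_e θ₀ + H_eq⁻¹ r`. -/
theorem stmt_14 {m dx dz dn deq : ℕ} (hm : 0 < m) (δ : ℝ) (hδ : 0 < δ)
    (x : Fin m → Fin dx → ℝ) (P : Matrix (Fin dz) (Fin dx) ℝ)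
    (Vh V : Fin m → Matrix (Fin dz) (Fin dz) ℝ)
    (hVh : ∀ i, (Vh i).PosDef) (hV : ∀ i, (V i).PosDef)
    (A : Matrix (Fin deq) (Fin dz) ℝ) (b : Fin deq → ℝ)
    (F : Matrix (Fin dz) (Fin dn) ℝ) (hFinj : Function.Injective F.mulVec)
    (hFrange : ∀ v : Fin dz → ℝ, A *ᵥ v = 0 ↔ ∃ w : Fin dn → ℝ, F *ᵥ w = v)
    (z₀ : Fin dz → ℝ) (hz₀ : A *ᵥ z₀ = b)
    {Ω : Type} [MeasurableSpace Ω] (μ : Measure Ω) [IsProbabilityMeasure μ]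
    (y : Fin m → Ω → Fin dz → ℝ) (θ₀ : Fin dx → ℝ)
    (hint : ∀ i j, Integrable (fun ω => y i ω j) μ)
    (hmean : ∀ i, (fun j => ∫ ω, y i ω j ∂μ) = P *ᵥ (diagonal (x i) *ᵥ θ₀))
    (hH : IsUnit (eqH δ x P Vh V F).det) :
    (fun j => ∫ ω,
        ((eqH δ x P Vh V F)⁻¹ *ᵥ eqD δ x P Vh V F z₀ (fun i => y i ω)) j ∂μ) =
      (eqH δ x P Vh V F)⁻¹ *ᵥ (eqDe δ x P Vh F *ᵥ θ₀) +
        (eqH δ x P Vh V F)⁻¹ *ᵥ eqR δ x P Vh V F z₀ := by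
  classical
  set N := (eqH δ x P Vh V F)⁻¹ with hN
  set Mi : Fin m → Matrix (Fin dx) (Fin dz) ℝ :=
    fun i => N * (diagonal (x i) * Pᵀ * F * (Fᵀ * Vh i * F)⁻¹ * Fᵀ) with hMi
  set ci : Fin m → Fin dz → ℝ :=
    fun i => (V i * (1 - F * (Fᵀ * Vh i * F)⁻¹ * Fᵀ * Vh i)) *ᵥ z₀ with hci
  have hcomp : ∀ (M : Matrix (Fin dx) (Fin dz) ℝ) (v : Fin dz → ℝ) (j : Fin dx),
      (M *ᵥ v) j = ∑ k, M j k * v k := fun M v j => rfl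
  have hLvec : ∀ ω : Ω, N *ᵥ eqD δ x P Vh V F z₀ (fun i => y i ω) =
      (1 / ((m : ℝ) * δ)) • ∑ i, Mi i *ᵥ (y i ω - ci i) := by
    intro ω
    simp only [eqD, Matrix.mulVec_smul]
    congr 1
    rw [mulVec_sum']
    exact Finset.sum_congr rfl fun i _ => Matrix.mulVec_mulVec ..
  have hL : ∀ (ω : Ω) (j : Fin dx),
      (N *ᵥ eqD δ x P Vh V F z₀ (fun i => y i ω)) j =
      (1 / ((m : ℝ) * δ)) * ∑ i, ∑ k, Mi i j k * (y i ω k - ci i k) := by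
    intro ω j
    rw [hLvec ω]
    simp only [Pi.smul_apply, Finset.sum_apply, smul_eq_mul, hcomp, Pi.sub_apply]
  have h1 : (N *ᵥ (eqDe δ x P Vh F *ᵥ θ₀)) =
      (1 / ((m : ℝ) * δ)) • ∑ i, Mi i *ᵥ (P *ᵥ (diagonal (x i) *ᵥ θ₀)) := by
    simp only [eqDe, Matrix.smul_mulVec, Matrix.mulVec_smul]
    congr 1
    rw [sum_mulVec', mulVec_sum']
    refine Finset.sum_congr rfl fun i _ => ?_
    rw [show diagonal (x i) * Pᵀ * F * (Fᵀ * Vh i * F)⁻¹ * Fᵀ * P * diagonal (x i) =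
        (diagonal (x i) * Pᵀ * F * (Fᵀ * Vh i * F)⁻¹ * Fᵀ) * (P * diagonal (x i)) by
      simp only [Matrix.mul_assoc]]
    rw [← Matrix.mulVec_mulVec, Matrix.mulVec_mulVec]
    exact congrArg _ (Matrix.mulVec_mulVec ..).symm
  have h2 : (N *ᵥ eqR δ x P Vh V F z₀) =
      -((1 / ((m : ℝ) * δ)) • ∑ i, Mi i *ᵥ ci i) := by
    simp only [eqR, Matrix.mulVec_neg, Matrix.mulVec_smul, neg_inj]
    congr 1
    rw [mulVec_sum']
    refine Finset.sum_congr rfl fun i _ => ?_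
    rw [show diagonal (x i) * Pᵀ * F * (Fᵀ * Vh i * F)⁻¹ * Fᵀ * V i *
        (1 - F * (Fᵀ * Vh i * F)⁻¹ * Fᵀ * Vh i) =
        (diagonal (x i) * Pᵀ * F * (Fᵀ * Vh i * F)⁻¹ * Fᵀ) *
          (V i * (1 - F * (Fᵀ * Vh i * F)⁻¹ * Fᵀ * Vh i)) by
      simp only [Matrix.mul_assoc]]
    rw [← Matrix.mulVec_mulVec, Matrix.mulVec_mulVec]
  have hR : ∀ j : Fin dx,
      ((eqH δ x P Vh V F)⁻¹ *ᵥ (eqDe δ x P Vh F *ᵥ θ₀) +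
        (eqH δ x P Vh V F)⁻¹ *ᵥ eqR δ x P Vh V F z₀) j =
      (1 / ((m : ℝ) * δ)) *
        ∑ i, ∑ k, Mi i j k * ((P *ᵥ (diagonal (x i) *ᵥ θ₀)) k - ci i k) := by
    intro j
    rw [Pi.add_apply, ← hN, h1, h2]
    simp only [Pi.neg_apply, Pi.smul_apply, Finset.sum_apply, smul_eq_mul, hcomp,
      mul_sub, Finset.sum_sub_distrib]
    ring
  funext j
  have hint' : ∀ i k, Integrable (fun ω => Mi i j k * (y i ω k - ci i k)) μ :=
    fun i k => (((hint i k).sub (integrable_const _)).const_mul _)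
  calc ∫ ω, (N *ᵥ eqD δ x P Vh V F z₀ (fun i => y i ω)) j ∂μ
      = ∫ ω, (1 / ((m : ℝ) * δ)) * ∑ i, ∑ k, Mi i j k * (y i ω k - ci i k) ∂μ := by
        simp only [hL]
    _ = (1 / ((m : ℝ) * δ)) * ∑ i, ∑ k, Mi i j k *
          ((∫ ω, y i ω k ∂μ) - ci i k) := by
        rw [integral_const_mul]
        congr 1
        rw [integral_finset_sum _ (fun i _ => integrable_finset_sum _ (fun k _ => hint' i k))]
        refine Finset.sum_congr rfl fun i _ => ?_
        rw [integral_finset_sum _ (fun k _ => hint' i k)]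
        refine Finset.sum_congr rfl fun k _ => ?_
        rw [integral_const_mul, integral_sub (hint i k) (integrable_const _),
          integral_const]
        simp
    _ = (1 / ((m : ℝ) * δ)) * ∑ i, ∑ k, Mi i j k *
          ((P *ᵥ (diagonal (x i) *ᵥ θ₀)) k - ci i k) := by
        refine congrArg _ (Finset.sum_congr rfl fun i _ => Finset.sum_congr rfl
          fun k _ => ?_)
        rw [show (∫ ω, y i ω k ∂μ) = (P *ᵥ (diagonal (x i) *ᵥ θ₀)) k from
          congrFun (hmean i) k]
    _ = _ := (hR j).symm
end

section
/- Let y⁽¹⁾,…,y⁽ᵐ⁾ : Ω → ℝ^{d_z} be independent, square-integrable random vectors, each with covariance matrix Σ̂ (Cov(y⁽ⁱ⁾_j, y⁽ⁱ⁾_k) = Σ̂_{jk} for all i, j, k). With H_eq invertible, define θ_eq* = H_eq⁻¹ d_eq(y). Then for all a, b ∈ ℝ^{d_x}, Cov(aᵀθ_eq*, bᵀθ_eq*) = aᵀ H_eq⁻¹ M_eq H_eq⁻¹ b, where M_eq = (1/(δ²m²)) Σ_{i=1}^m diag(x⁽ⁱ⁾) Pᵀ F (FᵀV̂⁽ⁱ⁾F)⁻¹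 Fᵀ Σ̂ F (FᵀV̂⁽ⁱ⁾F)⁻¹ Fᵀ P diag(x⁽ⁱ⁾). -/
open Matrix MeasureTheory ProbabilityTheory

/-- Covariance of two real-valued random variables:
`Cov(X, Y) = E[(X − E X)(Y − E Y)]`. -/
noncomputable def rvCov {Ω : Type} [MeasurableSpace Ω] (μ : Measure Ω)
    (X Y : Ω → ℝ) : ℝ :=
  ∫ ω, (X ω - ∫ ω', X ω' ∂μ) * (Y ω - ∫ ω', Y ω' ∂μ) ∂μ

/-- The matrix
`M_eq = (1/(δ²m²)) Σᵢ diag(x⁽ⁱ⁾) Pᵀ F (FᵀV̂⁽ⁱ⁾F)⁻¹ Fᵀ Σ̂ F (FᵀV̂⁽ⁱ⁾F)⁻¹ Fᵀ P diag(x⁽ⁱ⁾)`. -/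
noncomputable def eqM {m dx dz dn : ℕ} (δ : ℝ) (x : Fin m → Fin dx → ℝ)
    (P : Matrix (Fin dz) (Fin dx) ℝ) (Vh : Fin m → Matrix (Fin dz) (Fin dz) ℝ)
    (F : Matrix (Fin dz) (Fin dn) ℝ) (Sighat : Matrix (Fin dz) (Fin dz) ℝ) :
    Matrix (Fin dx) (Fin dx) ℝ :=
  (1 / (δ ^ 2 * (m : ℝ) ^ 2)) •
    ∑ i, diagonal (x i) * Pᵀ * F * (Fᵀ * Vh i * F)⁻¹ * Fᵀ * Sighat * F *
      (Fᵀ * Vh i * F)⁻¹ * Fᵀ * P * diagonal (x i)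

/-! The scalar `aᵀ H_eq⁻¹ d_eq(y)` is affine in the observations: it equals
`Σᵢ gᵢ(a) ⬝ y⁽ⁱ⁾ + const` with `gᵢ(a) = (1/(mδ)) Gᵢᵀ H_eq⁻ᵀ a` and
`Gᵢ = diag(x⁽ⁱ⁾) Pᵀ F (FᵀV̂⁽ⁱ⁾F)⁻¹ Fᵀ`. Covariance is bilinear and blind to constants, and by
independence only the diagonal terms survive, each contributing `gᵢ(a)ᵀ Σ̂ gᵢ(b)`. The sum is
`aᵀ H_eq⁻¹ (Σᵢ Gᵢ Σ̂ Gᵢᵀ / (mδ)²) H_eq⁻ᵀ b`; symmetry of `FᵀV̂⁽ⁱ⁾F` turns the middle factor into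
`M_eq`, and symmetry of `H_eq` turns `H_eq⁻ᵀ` into `H_eq⁻¹`. -/

lemma rvCov_eq_covariance {Ω : Type} [MeasurableSpace Ω] (μ : Measure Ω) (X Y : Ω → ℝ) :
    rvCov μ X Y = cov[X, Y; μ] :=
  rfl

section Covariance

variable {Ω n ι : Type*} {mΩ : MeasurableSpace Ω} {μ : Measure Ω} [Fintype n]

lemma memLp_dotProduct {Y : Ω → n → ℝ} (hY : ∀ j, MemLp (fun ω => Y ω j) 2 μ) (u : n → ℝ) :
    MemLp (fun ω => u ⬝ᵥ Y ω) 2 μ :=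
  memLp_finsetSum _ fun j _ => (hY j).const_mul (u j)

lemma covariance_dotProduct_dotProduct [IsFiniteMeasure μ] {Y : Ω → n → ℝ}
    (hY : ∀ j, MemLp (fun ω => Y ω j) 2 μ)
    {S : Matrix n n ℝ} (hS : ∀ j k, cov[fun ω => Y ω j, fun ω => Y ω k; μ] = S j k)
    (u v : n → ℝ) :
    cov[fun ω => u ⬝ᵥ Y ω, fun ω => v ⬝ᵥ Y ω; μ] = u ⬝ᵥ (S *ᵥ v) := by
  rw [show (fun ω => u ⬝ᵥ Y ω) = fun ω => ∑ j, u j * Y ω j from rfl,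
    show (fun ω => v ⬝ᵥ Y ω) = fun ω => ∑ k, v k * Y ω k from rfl,
    covariance_fun_sum_fun_sum (fun j => (hY j).const_mul (u j))
      (fun k => (hY k).const_mul (v k))]
  simp only [covariance_const_mul_left, covariance_const_mul_right, hS, dotProduct, mulVec,
    Finset.mul_sum]
  exact Finset.sum_congr rfl fun j _ => Finset.sum_congr rfl fun k _ => by ring

variable [IsProbabilityMeasure μ] [Fintype ι] {y : ι → Ω → n → ℝ}

lemma covariance_sum_dotProduct_of_indepFun
    (hindep : Pairwise fun i j => IndepFun (y i) (y j) μ)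
    (hL2 : ∀ i j, MemLp (fun ω => y i ω j) 2 μ) {S : ι → Matrix n n ℝ}
    (hS : ∀ i j k, cov[fun ω => y i ω j, fun ω => y i ω k; μ] = S i j k) (u v : ι → n → ℝ) :
    cov[fun ω => ∑ i, u i ⬝ᵥ y i ω, fun ω => ∑ i, v i ⬝ᵥ y i ω; μ] =
      ∑ i, u i ⬝ᵥ (S i *ᵥ v i) := by
  rw [covariance_fun_sum_fun_sum (fun i => memLp_dotProduct (hL2 i) (u i))
    (fun i => memLp_dotProduct (hL2 i) (v i))]
  refine Finset.sum_congr rfl fun i _ => ?_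
  rw [Finset.sum_eq_single_of_mem i (Finset.mem_univ i) fun k _ hki => ?_]
  · exact covariance_dotProduct_dotProduct (hL2 i) (hS i) (u i) (v i)
  · have hdot : ∀ w : n → ℝ, Measurable fun z : n → ℝ => w ⬝ᵥ z := fun w => by
      fun_prop
    exact ((hindep hki.symm).comp (hdot (u i)) (hdot (v k))).covariance_eq_zero
      (memLp_dotProduct (hL2 i) (u i)) (memLp_dotProduct (hL2 k) (v k))

lemma covariance_sum_dotProduct_sub_of_indepFun
    (hindep : Pairwise fun i j => IndepFun (y i) (y j) μ)
    (hL2 : ∀ i j, MemLp (fun ω => y i ω j) 2 μ) {S : ι → Matrix n n ℝ}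
    (hS : ∀ i j k, cov[fun ω => y i ω j, fun ω => y i ω k; μ] = S i j k)
    (u v w : ι → n → ℝ) :
    cov[fun ω => ∑ i, u i ⬝ᵥ (y i ω - w i), fun ω => ∑ i, v i ⬝ᵥ (y i ω - w i); μ] =
      ∑ i, u i ⬝ᵥ (S i *ᵥ v i) := by
  have hint (u : ι → n → ℝ) : Integrable (fun ω => ∑ i, u i ⬝ᵥ y i ω) μ :=
    (memLp_finsetSum _ fun i _ => memLp_dotProduct (hL2 i) (u i)).integrable one_le_two
  simp only [dotProduct_sub, Finset.sum_sub_distrib]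
  rw [covariance_sub_const_left (hint u), covariance_sub_const_right (hint v)]
  exact covariance_sum_dotProduct_of_indepFun hindep hL2 hS u v

end Covariance

section MatrixAlgebra

variable {m n ι : Type*} [Fintype m] [Fintype n] [Fintype ι]

lemma dotProduct_mulVec_smul_sum_mulVec (u : m → ℝ) (Q : Matrix m m ℝ) (c : ℝ)
    (B : ι → Matrix m n ℝ) (z : ι → n → ℝ) :
    u ⬝ᵥ (Q *ᵥ (c • ∑ i, B i *ᵥ z i)) = ∑ i, ((c • (Q * B i))ᵀ *ᵥ u) ⬝ᵥ z i := by
  simp only [mulVec_smul, mulVec_sum, mulVec_mulVec, dotProduct_smul, dotProduct_sum,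
    transpose_smul, smul_mulVec, smul_dotProduct, mulVec_transpose, ← dotProduct_mulVec,
    Finset.smul_sum]

lemma dotProduct_sum_mul_mul_transpose_mulVec (A : ι → Matrix m n ℝ) (S : Matrix n n ℝ)
    (u v : m → ℝ) :
    u ⬝ᵥ ((∑ i, A i * S * (A i)ᵀ) *ᵥ v) = ∑ i, ((A i)ᵀ *ᵥ u) ⬝ᵥ (S *ᵥ ((A i)ᵀ *ᵥ v)) := by
  simp only [sum_mulVec, dotProduct_sum, ← mulVec_mulVec, dotProduct_mulVec (v := u),
    mulVec_transpose]

end MatrixAlgebra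

section Gain

variable {m dx dz dn : ℕ}

noncomputable def eqGain (x : Fin m → Fin dx → ℝ) (P : Matrix (Fin dz) (Fin dx) ℝ)
    (Vh : Fin m → Matrix (Fin dz) (Fin dz) ℝ) (F : Matrix (Fin dz) (Fin dn) ℝ) (i : Fin m) :
    Matrix (Fin dx) (Fin dz) ℝ :=
  diagonal (x i) * Pᵀ * F * (Fᵀ * Vh i * F)⁻¹ * Fᵀ

variable (x : Fin m → Fin dx → ℝ) (P : Matrix (Fin dz) (Fin dx) ℝ)
  {Vh : Fin m → Matrix (Fin dz) (Fin dz) ℝ} (F : Matrix (Fin dz) (Fin dn) ℝ)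

lemma eqGain_mul_mul_transpose (hVh : ∀ i, (Vh i).IsSymm) (A : Matrix (Fin dz) (Fin dz) ℝ)
    (i : Fin m) :
    eqGain x P Vh F i * A * (eqGain x P Vh F i)ᵀ =
      diagonal (x i) * Pᵀ * F * (Fᵀ * Vh i * F)⁻¹ * Fᵀ * A * F *
        (Fᵀ * Vh i * F)⁻¹ * Fᵀ * P * diagonal (x i) := by
  have hK : (Fᵀ * Vh i * F).IsSymm := by
    simp [IsSymm, transpose_mul, (hVh i).eq, Matrix.mul_assoc]
  simp only [eqGain, transpose_mul, transpose_transpose, diagonal_transpose, hK.inv.eq]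
  simp only [Matrix.mul_assoc]

lemma eqH_eq_sum (δ : ℝ) (V : Fin m → Matrix (Fin dz) (Fin dz) ℝ) (hVh : ∀ i, (Vh i).IsSymm) :
    eqH δ x P Vh V F =
      (1 / ((m : ℝ) * δ)) • ∑ i, eqGain x P Vh F i * V i * (eqGain x P Vh F i)ᵀ := by
  simp only [eqH, eqGain_mul_mul_transpose x P F hVh]

lemma eqM_eq_sum (δ : ℝ) (S : Matrix (Fin dz) (Fin dz) ℝ) (hVh : ∀ i, (Vh i).IsSymm) :
    eqM δ x P Vh F S =
      (1 / (δ ^ 2 * (m : ℝ) ^ 2)) • ∑ i, eqGain x P Vh F i * S * (eqGain x P Vh F i)ᵀ := by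
  simp only [eqM, eqGain_mul_mul_transpose x P F hVh]

lemma eqH_isSymm (δ : ℝ) {V : Fin m → Matrix (Fin dz) (Fin dz) ℝ} (hVh : ∀ i, (Vh i).IsSymm)
    (hV : ∀ i, (V i).IsSymm) : (eqH δ x P Vh V F).IsSymm := by
  rw [eqH_eq_sum x P F δ V hVh]
  refine IsSymm.smul ?_ _
  simp only [IsSymm, transpose_sum, transpose_mul, transpose_transpose, (hV _).eq,
    Matrix.mul_assoc]

lemma eqD_eq (δ : ℝ) (V : Fin m → Matrix (Fin dz) (Fin dz) ℝ) (z₀ : Fin dz → ℝ)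
    (y : Fin m → Fin dz → ℝ) :
    eqD δ x P Vh V F z₀ y = (1 / ((m : ℝ) * δ)) • ∑ i, eqGain x P Vh F i *ᵥ
      (y i - (V i * (1 - F * (Fᵀ * Vh i * F)⁻¹ * Fᵀ * Vh i)) *ᵥ z₀) :=
  rfl

end Gain

theorem stmt_16_general {m dx dz dn : ℕ} (δ : ℝ)
    (x : Fin m → Fin dx → ℝ) (P : Matrix (Fin dz) (Fin dx) ℝ)
    (Vh V : Fin m → Matrix (Fin dz) (Fin dz) ℝ)
    (hVh : ∀ i, (Vh i).PosDef) (hV : ∀ i, (V i).PosDef)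
    (F : Matrix (Fin dz) (Fin dn) ℝ)
    (z₀ : Fin dz → ℝ)
    {Ω : Type} [MeasurableSpace Ω] (μ : Measure Ω) [IsProbabilityMeasure μ]
    (y : Fin m → Ω → Fin dz → ℝ)
    (hindep : ∀ i j, i ≠ j → IndepFun (y i) (y j) μ)
    (hL2 : ∀ i j, MemLp (fun ω => y i ω j) 2 μ)
    (Sighat : Matrix (Fin dz) (Fin dz) ℝ)
    (hcov : ∀ i j k, rvCov μ (fun ω => y i ω j) (fun ω => y i ω k) = Sighat j k) :
    ∀ a b : Fin dx → ℝ,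
      rvCov μ
        (fun ω => a ⬝ᵥ ((eqH δ x P Vh V F)⁻¹ *ᵥ eqD δ x P Vh V F z₀ (fun i => y i ω)))
        (fun ω => b ⬝ᵥ ((eqH δ x P Vh V F)⁻¹ *ᵥ eqD δ x P Vh V F z₀ (fun i => y i ω))) =
      a ⬝ᵥ (((eqH δ x P Vh V F)⁻¹ * eqM δ x P Vh F Sighat * (eqH δ x P Vh V F)⁻¹) *ᵥ b) := by
  intro a b
  have hVh' : ∀ i, (Vh i).IsSymm := fun i => isHermitian_iff_isSymm.mp (hVh i).isHermitian
  have hV' : ∀ i, (V i).IsSymm := fun i => isHermitian_iff_isSymm.mp (hV i).isHermitian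
  have hQ : ((eqH δ x P Vh V F)⁻¹)ᵀ = (eqH δ x P Vh V F)⁻¹ := by
    rw [transpose_nonsing_inv, (eqH_isSymm x P F δ hVh' hV').eq]
  simp only [rvCov_eq_covariance, eqD_eq, dotProduct_mulVec_smul_sum_mulVec]
  rw [covariance_sum_dotProduct_sub_of_indepFun hindep hL2 (S := fun _ => Sighat) hcov,
    ← dotProduct_sum_mul_mul_transpose_mulVec, eqM_eq_sum x P F δ Sighat hVh']
  have hc : 1 / (δ ^ 2 * (m : ℝ) ^ 2) = 1 / ((m : ℝ) * δ) * (1 / ((m : ℝ) * δ)) := by ring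
  congr 2
  simp only [hc, transpose_smul, transpose_mul, hQ, Matrix.smul_mul, Matrix.mul_smul, smul_smul,
    Matrix.mul_sum, Matrix.sum_mul, Finset.smul_sum, Matrix.mul_assoc]

/-- For independent square-integrable `y⁽ⁱ⁾` with common covariance `Σ̂`, the
equality-constrained IPO estimator `θ_eq* = H_eq⁻¹ d_eq(y)` satisfies
`Cov(aᵀθ_eq*, bᵀθ_eq*) = aᵀ H_eq⁻¹ M_eq H_eq⁻¹ b`. -/
theorem stmt_16 {m dx dz dn : ℕ} (hm : 0 < m) (δ : ℝ) (hδ : 0 < δ)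
    (x : Fin m → Fin dx → ℝ) (P : Matrix (Fin dz) (Fin dx) ℝ)
    (Vh V : Fin m → Matrix (Fin dz) (Fin dz) ℝ)
    (hVh : ∀ i, (Vh i).PosDef) (hV : ∀ i, (V i).PosDef)
    (F : Matrix (Fin dz) (Fin dn) ℝ) (hFinj : Function.Injective F.mulVec)
    (z₀ : Fin dz → ℝ)
    {Ω : Type} [MeasurableSpace Ω] (μ : Measure Ω) [IsProbabilityMeasure μ]
    (y : Fin m → Ω → Fin dz → ℝ)
    (hindep : ∀ i j, i ≠ j → IndepFun (y i) (y j) μ)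
    (hL2 : ∀ i j, MemLp (fun ω => y i ω j) 2 μ)
    (Sighat : Matrix (Fin dz) (Fin dz) ℝ)
    (hcov : ∀ i j k, rvCov μ (fun ω => y i ω j) (fun ω => y i ω k) = Sighat j k)
    (hH : IsUnit (eqH δ x P Vh V F).det) :
    ∀ a b : Fin dx → ℝ,
      rvCov μ
        (fun ω => a ⬝ᵥ ((eqH δ x P Vh V F)⁻¹ *ᵥ eqD δ x P Vh V F z₀ (fun i => y i ω)))
        (fun ω => b ⬝ᵥ ((eqH δ x P Vh V F)⁻¹ *ᵥ eqD δ x P Vh V F z₀ (fun i => y i ω))) =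
      a ⬝ᵥ (((eqH δ x P Vh V F)⁻¹ * eqM δ x P Vh F Sighat * (eqH δ x P Vh V F)⁻¹) *ᵥ b) :=
  stmt_16_general δ x P Vh V hVh hV F z₀ μ y hindep hL2 Sighat hcov
end
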